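/- arXiv:2411.07825 — 5 statements merged into one kernel-verified Lean document; each statement's English description precedes it below -/
import Mathlib

section
/- Let K be an m×n real matrix such that A − BK is Schur stable, let P be a real symmetric n×n matrix satisfying the discrete Lyapunov equation P = Q + KᵀRK + (A − BK)ᵀP(A − BK), and define the updated gain K' = (R + BᵀPB)⁻¹BᵀPA. Then A − BK' is Schur stable. -/
/-!
With `G = R + BᵀPB`, the update rule says `G K' = BᵀPA`, and completing the square turns the
Lyapunov equation for `K` into
`P = Q + K'ᵀRK' + (K - K')ᵀG(K - K') + (A - BK')ᵀP(A - BK')`.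
Since `A - BK` is Schur stable, `xₖᵀPxₖ` along `xₖ = (A - BK)ᵏx` decreases (by the Lyapunov
equation) to `0`, so `P ≥ 0`.
If `(A - BK')v = μv` with `|μ| ≥ 1`, evaluating the identity at `v` gives
`(1 - |μ|²) v*Pv = v*Qv + (K'v)*R(K'v) + ((K - K')v)*G((K - K')v)`, whose sides have opposite
signs; hence `Qv = 0` and `K'v = 0`. Then `Av = μv`, so `QAᵏv = μᵏQv = 0` for all `k`, and
observability forces `v = 0`.
-/

open Matrix

/-- A real square matrix is Schur stable if every eigenvalue of it, viewed as a
complex matrix, has modulus strictly less than `1`. -/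
def SchurStable {n : ℕ} (M : Matrix (Fin n) (Fin n) ℝ) : Prop :=
  ∀ μ ∈ spectrum ℂ (M.map (algebraMap ℝ ℂ)), ‖μ‖ < 1

open Filter Topology
open scoped ComplexOrder

theorem tendsto_pow_atTop_nhds_zero_of_spectralRadius_lt_one {A : Type*} [NormedRing A]
    [NormedAlgebra ℂ A] [CompleteSpace A] {a : A} (h : spectralRadius ℂ a < 1) :
    Tendsto (a ^ ·) atTop (𝓝 0) := by
  obtain ⟨c, hac, hc1⟩ := ENNReal.lt_iff_exists_nnreal_btwn.mp h
  have hbound : ∀ᶠ k : ℕ in atTop, ‖a ^ k‖ ≤ (c : ℝ) ^ k := by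
    filter_upwards [(spectrum.pow_nnnorm_pow_one_div_tendsto_nhds_spectralRadius a)
      |>.eventually_lt_const hac, eventually_gt_atTop 0] with k hk hk0
    have := ENNReal.rpow_inv_le_iff (z := k) (by exact_mod_cast hk0) |>.mp (by simpa using hk.le)
    rw [ENNReal.rpow_natCast, ← ENNReal.coe_pow, ENNReal.coe_le_coe] at this
    exact_mod_cast this
  exact squeeze_zero_norm' hbound
    (tendsto_pow_atTop_nhds_zero_of_lt_one c.2 (by exact_mod_cast hc1))

namespace Matrix

variable {n m : Type*}

section LinftyOpNorm

-- Any Banach algebra norm would do: this one induces the product topology on matrices.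
attribute [local instance] Matrix.linftyOpNormedRing Matrix.linftyOpNormedAlgebra

theorem tendsto_pow_atTop_nhds_zero_of_forall_norm_lt_one [Fintype n] [DecidableEq n]
    {M : Matrix n n ℂ} (h : ∀ μ ∈ spectrum ℂ M, ‖μ‖ < 1) : Tendsto (M ^ ·) atTop (𝓝 0) := by
  cases isEmpty_or_nonempty n
  · simpa only [Subsingleton.elim _ (0 : Matrix n n ℂ)] using tendsto_const_nhds
  · refine tendsto_pow_atTop_nhds_zero_of_spectralRadius_lt_one ?_
    simpa using spectrum.spectralRadius_lt_of_forall_lt M (r := 1) fun z hz ↦ mod_cast h z hz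

end LinftyOpNorm

theorem exists_mulVec_eq_smul_of_mem_spectrum [Fintype n] [DecidableEq n] {K : Type*} [Field K]
    {M : Matrix n n K} {μ : K} (hμ : μ ∈ spectrum K M) : ∃ v ≠ 0, M *ᵥ v = μ • v := by
  rw [← spectrum_toLin', ← Module.End.hasEigenvalue_iff_mem_spectrum] at hμ
  obtain ⟨v, hv, hv0⟩ := hμ.exists_hasEigenvector
  exact ⟨v, hv0, by simpa using Module.End.mem_eigenspace_iff.mp hv⟩

theorem pow_mulVec_of_mulVec_eq_smul [Fintype n] [DecidableEq n] {K : Type*} [CommSemiring K]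
    {M : Matrix n n K} {μ : K} {v : n → K} (hv : M *ᵥ v = μ • v) (k : ℕ) :
    M ^ k *ᵥ v = μ ^ k • v := by
  induction k with
  | zero => simp
  | succ k ih => rw [pow_succ', ← mulVec_mulVec, ih, mulVec_smul, hv, smul_smul, pow_succ]

theorem star_dotProduct_conjTranspose_mul_mul_mulVec [Fintype n] [Fintype m] {𝕜 : Type*}
    [CommRing 𝕜] [StarRing 𝕜] (X : Matrix m n 𝕜) (Y : Matrix m m 𝕜) (v : n → 𝕜) :
    star v ⬝ᵥ (Xᴴ * Y * X) *ᵥ v = star (X *ᵥ v) ⬝ᵥ Y *ᵥ (X *ᵥ v) := by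
  rw [dotProduct_mulVec, ← vecMul_vecMul, ← vecMul_vecMul, ← star_mulVec, ← dotProduct_mulVec,
    ← dotProduct_mulVec]

section RCLike

variable {𝕜 : Type*} [RCLike 𝕜] [Fintype n]

theorem PosSemidef.mulVec_eq_zero_of_add {M N : Matrix n n 𝕜} (hM : M.PosSemidef)
    (hN : N.PosSemidef) {v : n → 𝕜} (h : (M + N) *ᵥ v = 0) : M *ᵥ v = 0 ∧ N *ᵥ v = 0 := by
  have hsum : star v ⬝ᵥ M *ᵥ v + star v ⬝ᵥ N *ᵥ v = 0 := by
    rw [← dotProduct_add, ← add_mulVec, h, dotProduct_zero]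
  obtain ⟨hMv, hNv⟩ := (add_eq_zero_iff_of_nonneg (hM.dotProduct_mulVec_nonneg v)
    (hN.dotProduct_mulVec_nonneg v)).mp hsum
  exact ⟨(hM.dotProduct_mulVec_zero_iff v).mp hMv, (hN.dotProduct_mulVec_zero_iff v).mp hNv⟩

theorem PosDef.mulVec_eq_zero_of_conjTranspose_mul_mul [Fintype m] {R : Matrix m m 𝕜}
    (hR : R.PosDef) {X : Matrix m n 𝕜} {v : n → 𝕜} (h : (Xᴴ * R * X) *ᵥ v = 0) : X *ᵥ v = 0 := by
  by_contra hXv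
  have hpos := hR.dotProduct_mulVec_pos hXv
  rw [← star_dotProduct_conjTranspose_mul_mul_mulVec, h, dotProduct_zero] at hpos
  exact hpos.false

variable {L S P : Matrix n n 𝕜}

theorem posSemidef_of_eq_add_conjTranspose_mul_mul [DecidableEq n]
    (hL : Tendsto (L ^ ·) atTop (𝓝 0)) (hS : S.PosSemidef) (hP : P.IsHermitian)
    (hPeq : P = S + Lᴴ * P * L) : P.PosSemidef := by
  refine posSemidef_iff_dotProduct_mulVec.mpr ⟨hP, fun x ↦ ?_⟩
  let f : ℕ → 𝕜 := fun k ↦ star (L ^ k *ᵥ x) ⬝ᵥ P *ᵥ (L ^ k *ᵥ x)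
  have hstep (k : ℕ) : f k = star (L ^ k *ᵥ x) ⬝ᵥ S *ᵥ (L ^ k *ᵥ x) + f (k + 1) := by
    simp only [f]
    conv_lhs => rw [hPeq]
    rw [add_mulVec, dotProduct_add, star_dotProduct_conjTranspose_mul_mul_mulVec, pow_succ',
      ← mulVec_mulVec]
  have hanti : Antitone f := antitone_nat_of_succ_le fun k ↦ by
    rw [hstep k]
    exact le_add_of_nonneg_left (hS.dotProduct_mulVec_nonneg _)
  have hlim : Tendsto f atTop (𝓝 0) := by
    have hcont : Continuous fun M : Matrix n n 𝕜 ↦ star (M *ᵥ x) ⬝ᵥ P *ᵥ (M *ᵥ x) := by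
      fun_prop
    simp only [f]
    simpa only [Function.comp_def, zero_mulVec, star_zero, zero_dotProduct]
      using (hcont.tendsto 0).comp hL
  simpa [f] using hanti.le_of_tendsto hlim 0

theorem mulVec_eq_zero_of_eq_add_conjTranspose_mul_mul (hP : P.PosSemidef) (hS : S.PosSemidef)
    (hPeq : P = S + Lᴴ * P * L) {μ : 𝕜} {v : n → 𝕜} (hv : L *ᵥ v = μ • v) (hμ : 1 ≤ ‖μ‖) :
    S *ᵥ v = 0 := by
  have hquad : star v ⬝ᵥ P *ᵥ v = star v ⬝ᵥ S *ᵥ v + (‖μ‖ ^ 2 : ℝ) * (star v ⬝ᵥ P *ᵥ v) := by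
    conv_lhs => rw [hPeq]
    rw [add_mulVec, dotProduct_add, star_dotProduct_conjTranspose_mul_mul_mulVec, hv, star_smul,
      mulVec_smul, smul_dotProduct, dotProduct_smul, smul_smul, smul_eq_mul, RCLike.star_def,
      RCLike.conj_mul, RCLike.ofReal_pow]
  refine (hS.dotProduct_mulVec_zero_iff v).mp (le_antisymm ?_ (hS.dotProduct_mulVec_nonneg v))
  rw [show star v ⬝ᵥ S *ᵥ v = ((1 - ‖μ‖ ^ 2 : ℝ) : 𝕜) * (star v ⬝ᵥ P *ᵥ v) by
    push_cast at hquad ⊢; linear_combination -hquad]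
  refine mul_nonpos_of_nonpos_of_nonneg ?_ (hP.dotProduct_mulVec_nonneg v)
  exact RCLike.ofReal_nonpos.mpr (by nlinarith [norm_nonneg μ])

theorem mulVec_eq_zero_and_mulVec_eq_zero_of_eq_add_conjTranspose_mul_mul [Fintype m]
    {Q : Matrix n n 𝕜} {R G : Matrix m m 𝕜} {K E : Matrix m n 𝕜} (hP : P.PosSemidef)
    (hQ : Q.PosSemidef) (hR : R.PosDef) (hG : G.PosSemidef)
    (hPeq : P = Q + Kᴴ * R * K + Eᴴ * G * E + Lᴴ * P * L) {μ : 𝕜} {v : n → 𝕜}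
    (hv : L *ᵥ v = μ • v) (hμ : 1 ≤ ‖μ‖) : Q *ᵥ v = 0 ∧ K *ᵥ v = 0 := by
  have hQR := hQ.add (hR.posSemidef.conjTranspose_mul_mul_same K)
  obtain ⟨hQRv, -⟩ := hQR.mulVec_eq_zero_of_add (hG.conjTranspose_mul_mul_same E) <|
    mulVec_eq_zero_of_eq_add_conjTranspose_mul_mul hP
      (hQR.add (hG.conjTranspose_mul_mul_same E)) hPeq hv hμ
  obtain ⟨hQv, hRv⟩ := hQ.mulVec_eq_zero_of_add (hR.posSemidef.conjTranspose_mul_mul_same K) hQRv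
  exact ⟨hQv, hR.mulVec_eq_zero_of_conjTranspose_mul_mul hRv⟩

end RCLike

theorem lyapunov_eq_of_gain_update [Fintype n] [Fintype m] {α : Type*} [CommRing α]
    {A P Q : Matrix n n α} {B : Matrix n m α} {R : Matrix m m α} {K K' : Matrix m n α}
    (hPt : P.IsSymm) (hRt : R.IsSymm) (hK' : (R + Bᵀ * P * B) * K' = Bᵀ * P * A)
    (hP : P = Q + Kᵀ * R * K + (A - B * K)ᵀ * P * (A - B * K)) :
    P = Q + K'ᵀ * R * K' + (K - K')ᵀ * (R + Bᵀ * P * B) * (K - K')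
      + (A - B * K')ᵀ * P * (A - B * K') := by
  have hexpand (F : Matrix m n α) : Fᵀ * R * F + (A - B * F)ᵀ * P * (A - B * F)
      = Aᵀ * P * A + Fᵀ * (R + Bᵀ * P * B) * F - Aᵀ * P * B * F - Fᵀ * (Bᵀ * P * A) := by
    simp only [transpose_sub, transpose_mul, Matrix.sub_mul, Matrix.mul_sub, Matrix.add_mul,
      Matrix.mul_add, Matrix.mul_assoc]
    abel
  have hK't : Aᵀ * P * B = K'ᵀ * (R + Bᵀ * P * B) := by
    simpa [Matrix.mul_assoc, hPt.eq, hRt.eq] using (congrArg transpose hK').symm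
  have hcost : Kᵀ * R * K + (A - B * K)ᵀ * P * (A - B * K)
      = K'ᵀ * R * K' + (A - B * K')ᵀ * P * (A - B * K')
        + (K - K')ᵀ * (R + Bᵀ * P * B) * (K - K') := by
    rw [hexpand, hexpand, hK't, ← hK']
    simp only [transpose_sub, Matrix.sub_mul, Matrix.mul_sub, Matrix.mul_assoc]
    abel
  conv_lhs => rw [hP, add_assoc, hcost]
  abel

section Complexification

theorem map_algebraMap_transpose (X : Matrix m n ℝ) :
    Xᵀ.map (algebraMap ℝ ℂ) = (X.map (algebraMap ℝ ℂ))ᴴ := by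
  rw [← conjTranspose_eq_transpose_of_trivial, conjTranspose_map _ fun r ↦ by simp]

theorem map_algebraMap_transpose_mul_mul [Fintype m] (X : Matrix m n ℝ) (Y : Matrix m m ℝ) :
    (Xᵀ * Y * X).map (algebraMap ℝ ℂ)
      = (X.map (algebraMap ℝ ℂ))ᴴ * Y.map (algebraMap ℝ ℂ) * X.map (algebraMap ℝ ℂ) := by
  rw [Matrix.map_mul, Matrix.map_mul, map_algebraMap_transpose]

open scoped MatrixOrder in
theorem PosSemidef.map_algebraMap [Fintype n] {M : Matrix n n ℝ} (hM : M.PosSemidef) :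
    (M.map (algebraMap ℝ ℂ)).PosSemidef := by
  classical
  obtain ⟨X, rfl⟩ := CStarAlgebra.nonneg_iff_eq_star_mul_self.mp hM.nonneg
  rw [star_eq_conjTranspose, conjTranspose_eq_transpose_of_trivial, Matrix.map_mul,
    map_algebraMap_transpose]
  exact posSemidef_conjTranspose_mul_self _

theorem PosDef.map_algebraMap [Fintype n] [DecidableEq n] {M : Matrix n n ℝ} (hM : M.PosDef) :
    (M.map (algebraMap ℝ ℂ)).PosDef :=
  hM.posSemidef.map_algebraMap.posDef_iff_isUnit.mpr <| by
    simpa using (algebraMap ℝ ℂ).mapMatrix.isUnit_map hM.isUnit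

theorem map_algebraMap_mulVec_re [Fintype n] (M : Matrix m n ℝ) (v : n → ℂ) :
    (fun i ↦ (M.map (algebraMap ℝ ℂ) *ᵥ v) i |>.re) = M *ᵥ fun j ↦ (v j).re := by
  ext i
  simp [mulVec, dotProduct, Complex.re_sum]

theorem map_algebraMap_mulVec_im [Fintype n] (M : Matrix m n ℝ) (v : n → ℂ) :
    (fun i ↦ (M.map (algebraMap ℝ ℂ) *ᵥ v) i |>.im) = M *ᵥ fun j ↦ (v j).im := by
  ext i
  simp [mulVec, dotProduct, Complex.im_sum]

theorem eq_zero_of_forall_map_algebraMap_mulVec_eq_zero [Fintype n] {ι : Type*}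
    {W : ι → Matrix m n ℝ} (hW : ∀ x : n → ℝ, (∀ k, W k *ᵥ x = 0) → x = 0) {v : n → ℂ}
    (hv : ∀ k, (W k).map (algebraMap ℝ ℂ) *ᵥ v = 0) : v = 0 := by
  have hre := hW _ fun k ↦ by rw [← map_algebraMap_mulVec_re, hv k]; rfl
  have him := hW _ fun k ↦ by rw [← map_algebraMap_mulVec_im, hv k]; rfl
  ext j
  exact Complex.ext (congrFun hre j) (congrFun him j)

theorem eq_zero_of_observable_of_mulVec_eq_smul [Fintype n] [DecidableEq n] {A : Matrix n n ℝ}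
    {Q : Matrix m n ℝ} (hObs : ∀ x : n → ℝ, (∀ k : ℕ, Q *ᵥ (A ^ k *ᵥ x) = 0) → x = 0) {μ : ℂ}
    {v : n → ℂ} (hAv : A.map (algebraMap ℝ ℂ) *ᵥ v = μ • v)
    (hQv : Q.map (algebraMap ℝ ℂ) *ᵥ v = 0) : v = 0 := by
  refine eq_zero_of_forall_map_algebraMap_mulVec_eq_zero (W := fun k ↦ Q * A ^ k)
    (fun x hx ↦ hObs x fun k ↦ by rw [mulVec_mulVec]; exact hx k) fun k ↦ ?_
  rw [Matrix.map_mul, ← RingHom.mapMatrix_apply _ (A ^ k), map_pow, RingHom.mapMatrix_apply,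
    ← mulVec_mulVec, pow_mulVec_of_mulVec_eq_smul hAv, mulVec_smul, hQv, smul_zero]

end Complexification

end Matrix

theorem SchurStable.tendsto_pow_atTop_nhds_zero {n : ℕ} {L : Matrix (Fin n) (Fin n) ℝ}
    (hL : SchurStable L) : Tendsto (L ^ ·) atTop (𝓝 0) := by
  have hre : Continuous fun M : Matrix (Fin n) (Fin n) ℂ ↦ M.map Complex.re :=
    continuous_id.matrix_map Complex.continuous_re
  refine ((hre.tendsto 0).comp (tendsto_pow_atTop_nhds_zero_of_forall_norm_lt_one hL)).congr
    fun k ↦ ?_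
  rw [Function.comp_apply, ← RingHom.mapMatrix_apply, ← map_pow, RingHom.mapMatrix_apply,
    Matrix.map_map]
  ext i j
  simp

theorem SchurStable.posSemidef_of_eq_add_transpose_mul_mul {n : ℕ}
    {L S P : Matrix (Fin n) (Fin n) ℝ} (hL : SchurStable L) (hS : S.PosSemidef) (hP : P.IsSymm)
    (hPeq : P = S + Lᵀ * P * L) : P.PosSemidef :=
  posSemidef_of_eq_add_conjTranspose_mul_mul hL.tendsto_pow_atTop_nhds_zero hS
    (isHermitian_iff_isSymm.mpr hP) (by rwa [conjTranspose_eq_transpose_of_trivial])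

theorem stmt_0 {n m : ℕ}
    (A : Matrix (Fin n) (Fin n) ℝ) (B : Matrix (Fin n) (Fin m) ℝ)
    (Q : Matrix (Fin n) (Fin n) ℝ) (R : Matrix (Fin m) (Fin m) ℝ)
    (hQ : Q.PosSemidef) (hR : R.PosDef)
    (hObs : ∀ x : Fin n → ℝ, (∀ k : ℕ, Q.mulVec ((A ^ k).mulVec x) = 0) → x = 0)
    (K : Matrix (Fin m) (Fin n) ℝ)
    (hK : SchurStable (A - B * K))
    (P : Matrix (Fin n) (Fin n) ℝ) (hPsymm : P.IsSymm)
    (hP : P = Q + Kᵀ * R * K + (A - B * K)ᵀ * P * (A - B * K))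
    (K' : Matrix (Fin m) (Fin n) ℝ)
    (hK' : K' = (R + Bᵀ * P * B)⁻¹ * (Bᵀ * P * A)) :
    SchurStable (A - B * K') := by
  intro μ hμ
  by_contra! hμ1
  obtain ⟨v, hv0, hv⟩ := exists_mulVec_eq_smul_of_mem_spectrum hμ
  have hRt : R.IsSymm := isHermitian_iff_isSymm.mp hR.isHermitian
  have hPpsd : P.PosSemidef := hK.posSemidef_of_eq_add_transpose_mul_mul
    (hQ.add (by simpa using hR.posSemidef.conjTranspose_mul_mul_same K)) hPsymm hP
  set G := R + Bᵀ * P * B with hGdef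
  have hG : G.PosDef := hR.add_posSemidef (by simpa using hPpsd.conjTranspose_mul_mul_same B)
  have hGK' : G * K' = Bᵀ * P * A := by
    rw [hK', mul_nonsing_inv_cancel_left _ _ ((isUnit_iff_isUnit_det G).mp hG.isUnit)]
  have hPc := congrArg (·.map (algebraMap ℝ ℂ)) (lyapunov_eq_of_gain_update hPsymm hRt hGK' hP)
  simp only [← hGdef, Matrix.map_add _ (map_add _), map_algebraMap_transpose_mul_mul] at hPc
  obtain ⟨hQv, hK'v⟩ := mulVec_eq_zero_and_mulVec_eq_zero_of_eq_add_conjTranspose_mul_mul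
    hPpsd.map_algebraMap hQ.map_algebraMap hR.map_algebraMap hG.posSemidef.map_algebraMap hPc hv
    hμ1
  refine hv0 (eq_zero_of_observable_of_mulVec_eq_smul hObs (μ := μ) ?_ hQv)
  rwa [Matrix.map_sub _ (map_sub _), Matrix.map_mul, sub_mulVec, ← mulVec_mulVec, hK'v,
    mulVec_zero, sub_zero] at hv
end

section
/- Let K be an m×n real matrix such that A − BK is Schur stable, let P be a real symmetric matrix satisfying P = Q + KᵀRK + (A − BK)ᵀP(A − BK), let K' = (R + BᵀPB)⁻¹BᵀPA, and let P' be a real symmetric matrix satisfying P' = Q + K'ᵀRK' + (A − BK')ᵀP'(A − BK'). Then P' ≤ P. Moreover, if P★ is any symmetric positive semidefinite solution of the ARE, then P★ ≤ P'. -/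
/-!
Completing the square around the gain `K' = (R + BᵀPB)⁻¹BᵀPA` shows that `P` solves the
Lyapunov equation of the closed loop `A - BK'` with the extra nonnegative cost
`(K - K')ᵀ(R + BᵀPB)(K - K')`. Likewise every positive semidefinite Riccati solution `P★`, with
its gain `K★ = (R + BᵀP★B)⁻¹BᵀP★A`, solves it with the cost `(K' - K★)ᵀ(R + BᵀP★B)(K' - K★)`
removed. Once `A - BK'` is Schur stable, the Lyapunov solution is monotone in the cost, which
gives `P★ ≤ P' ≤ P`. Stability of `A - BK'` comes from `P` itself: `xᴴPx` cannot grow along an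
eigenvector with `|μ| ≥ 1`, so such an eigenvector is killed by `Q` and `K'`, hence is an
unobservable eigenvector of `A`.
-/

open Matrix

open Filter Topology
open scoped ComplexOrder MatrixOrder

section SpectralRadius

theorem tendsto_pow_atTop_nhds_zero_of_forall_spectrum_norm_lt_one {A : Type*} [NormedRing A]
    [NormedAlgebra ℂ A] [CompleteSpace A] {a : A} (h : ∀ μ ∈ spectrum ℂ a, ‖μ‖ < 1) :
    Tendsto (a ^ ·) atTop (𝓝 0) := by
  nontriviality A
  have hρ : spectralRadius ℂ a < 1 := by
    simpa using spectrum.spectralRadius_lt_of_forall_lt_of_nonempty (spectrum.nonempty a)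
      (r := 1) (by simpa [← NNReal.coe_lt_coe] using h)
  obtain ⟨r, hρr, hr1⟩ := ENNReal.lt_iff_exists_nnreal_btwn.mp hρ
  -- Gelfand's formula: eventually `‖a ^ k‖ ^ (1 / k) < r`
  have hgelfand :=
    (spectrum.pow_nnnorm_pow_one_div_tendsto_nhds_spectralRadius a).eventually_lt_const hρr
  have hle : ∀ᶠ k : ℕ in atTop, ‖a ^ k‖₊ ≤ r ^ k := by
    filter_upwards [hgelfand, eventually_gt_atTop 0] with k hk hk0
    rw [one_div, ENNReal.rpow_inv_lt_iff (by positivity), ENNReal.rpow_natCast] at hk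
    exact_mod_cast hk.le
  exact squeeze_zero_norm' (by simpa [← NNReal.coe_le_coe] using hle)
    (tendsto_pow_atTop_nhds_zero_of_lt_one r.coe_nonneg (by exact_mod_cast hr1))

theorem SchurStable.tendsto_pow {n : ℕ} {M : Matrix (Fin n) (Fin n) ℝ} (hM : SchurStable M) :
    Tendsto (M ^ ·) atTop (𝓝 0) := by
  -- this Banach algebra norm induces the entrywise topology definitionally
  let := Matrix.linftyOpNormedRing (n := Fin n) (α := ℂ)
  let := Matrix.linftyOpNormedAlgebra (n := Fin n) (α := ℂ) (R := ℂ)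
  have hre := ((continuous_id.matrix_map Complex.continuous_re).tendsto 0).comp
    (tendsto_pow_atTop_nhds_zero_of_forall_spectrum_norm_lt_one hM)
  convert hre using 1
  · ext k : 1
    rw [Function.comp_apply, id, ← (algebraMap ℝ ℂ).mapMatrix_apply, ← map_pow,
      RingHom.mapMatrix_apply, Matrix.map_map]
    ext; simp
  · simp

end SpectralRadius

section Lyapunov

variable {ι : Type*} [Fintype ι] [DecidableEq ι]

theorem Matrix.PosSemidef.of_eq_add_transpose_mul_mul {M S X : Matrix ι ι ℝ}
    (hM : Tendsto (M ^ ·) atTop (𝓝 0)) (hS : S.PosSemidef) (hX : X.IsSymm)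
    (h : X = S + Mᵀ * X * M) : X.PosSemidef := by
  refine .of_dotProduct_mulVec_nonneg (isHermitian_iff_isSymm.mpr hX) fun x => ?_
  set q : (ι → ℝ) → ℝ := fun y => y ⬝ᵥ X *ᵥ y
  have hstep (y : ι → ℝ) : q (M *ᵥ y) ≤ q y := by
    have hy : q y = y ⬝ᵥ S *ᵥ y + q (M *ᵥ y) := by
      simp only [q]
      conv_lhs => rw [h]
      rw [add_mulVec, dotProduct_add, ← mulVec_mulVec, ← mulVec_mulVec, dotProduct_mulVec y Mᵀ,
        vecMul_transpose]
    simpa [hy] using hS.dotProduct_mulVec_nonneg y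
  have hdec (k : ℕ) : q (M ^ k *ᵥ x) ≤ q x := by
    induction k with
    | zero => simp
    | succ k ih => exact (pow_succ' M k ▸ mulVec_mulVec x M (M ^ k) ▸ hstep _).trans ih
  have hlim : Tendsto (fun k => q (M ^ k *ᵥ x)) atTop (𝓝 (q (0 *ᵥ x))) :=
    ((by fun_prop : Continuous fun N : Matrix ι ι ℝ => q (N *ᵥ x)).tendsto 0).comp hM
  simpa [q] using le_of_tendsto' hlim hdec

theorem Matrix.PosSemidef.sub_of_eq_add_transpose_mul_mul {M S₁ S₂ X₁ X₂ : Matrix ι ι ℝ}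
    (hM : Tendsto (M ^ ·) atTop (𝓝 0)) (h₁ : X₁ = S₁ + Mᵀ * X₁ * M)
    (h₂ : X₂ = S₂ + Mᵀ * X₂ * M) (hS : (S₁ - S₂).PosSemidef) (hX : (X₁ - X₂).IsSymm) :
    (X₁ - X₂).PosSemidef := by
  refine .of_eq_add_transpose_mul_mul hM hS hX ?_
  calc X₁ - X₂ = S₁ + Mᵀ * X₁ * M - (S₂ + Mᵀ * X₂ * M) := by rw [← h₁, ← h₂]
    _ = S₁ - S₂ + Mᵀ * (X₁ - X₂) * M := by noncomm_ring

end Lyapunov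

section CompletionOfSquares

variable {ι κ α : Type*} [Fintype ι] [Fintype κ] [CommRing α]
  {A X : Matrix ι ι α} {B : Matrix ι κ α} {R : Matrix κ κ α}

theorem transpose_mul_eq_of_mul_eq (hX : Xᵀ = X) (hR : Rᵀ = R) {L : Matrix κ ι α}
    (hL : (R + Bᵀ * X * B) * L = Bᵀ * X * A) : Lᵀ * (R + Bᵀ * X * B) = Aᵀ * X * B := by
  simpa [transpose_mul, hX, hR, Matrix.mul_assoc] using congrArg transpose hL

theorem completion_of_squares (hX : Xᵀ = X) (hR : Rᵀ = R) {L : Matrix κ ι α}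
    (hL : (R + Bᵀ * X * B) * L = Bᵀ * X * A) (F : Matrix κ ι α) :
    Fᵀ * R * F + (A - B * F)ᵀ * X * (A - B * F) =
      Lᵀ * R * L + (A - B * L)ᵀ * X * (A - B * L) + (F - L)ᵀ * (R + Bᵀ * X * B) * (F - L) := by
  have hL' := transpose_mul_eq_of_mul_eq hX hR hL
  have e₁ := congrArg (Fᵀ * ·) hL
  have e₂ := congrArg (Lᵀ * ·) hL
  have e₃ := congrArg (· * F) hL'
  have e₄ := congrArg (· * L) hL'
  simp only [transpose_sub, transpose_mul, Matrix.mul_sub, Matrix.sub_mul, Matrix.mul_add,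
    Matrix.add_mul, Matrix.mul_assoc] at e₁ e₂ e₃ e₄ ⊢
  linear_combination (norm := abel) e₁ - e₂ + e₃ - e₄

theorem exists_gain_of_riccati [DecidableEq κ] {Q : Matrix ι ι α} (hX : Xᵀ = X) (hR : Rᵀ = R)
    (hG : IsUnit (R + Bᵀ * X * B).det)
    (hARE : Aᵀ * X * A - X - Aᵀ * X * B * (R + Bᵀ * X * B)⁻¹ * (Bᵀ * X * A) + Q = 0) :
    ∃ L : Matrix κ ι α, (R + Bᵀ * X * B) * L = Bᵀ * X * A ∧
      X = Q + Lᵀ * R * L + (A - B * L)ᵀ * X * (A - B * L) := by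
  set L := (R + Bᵀ * X * B)⁻¹ * (Bᵀ * X * A)
  have hL : (R + Bᵀ * X * B) * L = Bᵀ * X * A := mul_nonsing_inv_cancel_left _ _ hG
  have hLGL : Lᵀ * (R + Bᵀ * X * B) * L =
      Aᵀ * X * B * (R + Bᵀ * X * B)⁻¹ * (Bᵀ * X * A) := by
    rw [transpose_mul_eq_of_mul_eq hX hR hL]; simp only [L, Matrix.mul_assoc]
  have h₀ := completion_of_squares hX hR hL 0
  simp only [transpose_zero, Matrix.zero_mul, Matrix.mul_zero, zero_add, sub_zero, zero_sub,
    transpose_neg, Matrix.neg_mul, Matrix.mul_neg, neg_neg, hLGL] at h₀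
  exact ⟨L, hL, by linear_combination (norm := abel) -hARE + h₀⟩

end CompletionOfSquares

section Complexification

variable {ι κ : Type*} [Fintype κ]

theorem Matrix.PosSemidef.map_ofReal [DecidableEq κ] {N : Matrix κ κ ℝ} (hN : N.PosSemidef) :
    (N.map (algebraMap ℝ ℂ)).PosSemidef := by
  obtain ⟨D, rfl⟩ := CStarAlgebra.nonneg_iff_eq_star_mul_self.mp hN.nonneg
  rw [star_eq_conjTranspose, Matrix.map_mul, conjTranspose_map _ (by simp [Function.Semiconj])]
  exact posSemidef_conjTranspose_mul_self _

omit [Fintype κ] in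
theorem Matrix.transpose_map_ofReal (N : Matrix ι κ ℝ) :
    Nᵀ.map (algebraMap ℝ ℂ) = (N.map (algebraMap ℝ ℂ))ᴴ := by
  ext; simp

theorem Matrix.re_map_ofReal_mulVec (N : Matrix ι κ ℝ) (v : κ → ℂ) (i : ι) :
    ((N.map (algebraMap ℝ ℂ) *ᵥ v) i).re = (N *ᵥ fun j => (v j).re) i := by
  simp [mulVec, dotProduct, Complex.re_sum]

theorem Matrix.im_map_ofReal_mulVec (N : Matrix ι κ ℝ) (v : κ → ℂ) (i : ι) :
    ((N.map (algebraMap ℝ ℂ) *ᵥ v) i).im = (N *ᵥ fun j => (v j).im) i := by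
  simp [mulVec, dotProduct, Complex.im_sum]

theorem eq_zero_of_forall_map_ofReal_mulVec_eq_zero {N : ℕ → Matrix ι κ ℝ}
    (hN : ∀ x : κ → ℝ, (∀ k, N k *ᵥ x = 0) → x = 0) {v : κ → ℂ}
    (hv : ∀ k, (N k).map (algebraMap ℝ ℂ) *ᵥ v = 0) : v = 0 := by
  have hre := hN _ fun k => funext fun i => by rw [← re_map_ofReal_mulVec, hv k]; rfl
  have him := hN _ fun k => funext fun i => by rw [← im_map_ofReal_mulVec, hv k]; rfl
  exact funext fun j => Complex.ext (congrFun hre j) (congrFun him j)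

theorem SchurStable.of_posSemidef_sub {n : ℕ} {M P S : Matrix (Fin n) (Fin n) ℝ}
    (hP : P.PosSemidef) (hS : S.PosSemidef) (hPS : (P - Mᵀ * P * M - S).PosSemidef)
    (hObs : ∀ x, (∀ k, S *ᵥ (M ^ k *ᵥ x) = 0) → x = 0) : SchurStable M := by
  intro μ hμ
  by_contra! hμ1
  rw [← spectrum_toLin', ← Module.End.hasEigenvalue_iff_mem_spectrum] at hμ
  obtain ⟨v, hv⟩ := hμ.exists_hasEigenvector
  set φ := (algebraMap ℝ ℂ).mapMatrix (m := Fin n)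
  have hMv : φ M *ᵥ v = μ • v := (toLin'_apply _ _).symm.trans hv.apply_eq_smul
  set q : Matrix (Fin n) (Fin n) ℝ → ℂ := fun N => star v ⬝ᵥ φ N *ᵥ v
  have hq_nonneg {N} (hN : N.PosSemidef) : 0 ≤ q N := hN.map_ofReal.dotProduct_mulVec_nonneg v
  have hqM : q (Mᵀ * P * M) = (‖μ‖ : ℂ) ^ 2 * q P := by
    simp only [q, map_mul]
    rw [show φ Mᵀ = (φ M)ᴴ from transpose_map_ofReal M, ← mulVec_mulVec, ← mulVec_mulVec,
      dotProduct_mulVec, ← star_mulVec, hMv, star_smul, mulVec_smul, smul_dotProduct,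
      dotProduct_smul, smul_smul]
    simp [Complex.conj_mul']
  have hqS : q S ≤ 0 := calc
    q S ≤ q P - q (Mᵀ * P * M) := by
      have := hq_nonneg hPS
      simp only [q, map_sub, sub_mulVec, dotProduct_sub] at this
      exact sub_nonneg.mp this
    _ = (1 - ‖μ‖ ^ 2 : ℝ) * q P := by rw [hqM]; push_cast; ring
    _ ≤ 0 := mul_nonpos_of_nonpos_of_nonneg
      (by exact_mod_cast (by nlinarith : 1 - ‖μ‖ ^ 2 ≤ 0)) (hq_nonneg hP)
  have hSv : φ S *ᵥ v = 0 :=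
    (hS.map_ofReal.dotProduct_mulVec_zero_iff v).mp (le_antisymm hqS (hq_nonneg hS))
  have hpow (k : ℕ) : φ (M ^ k) *ᵥ v = μ ^ k • v := by
    induction k with
    | zero => simp
    | succ k ih =>
      rw [pow_succ, map_mul, ← mulVec_mulVec, hMv, mulVec_smul, ih, smul_smul, pow_succ']
  refine hv.2 (eq_zero_of_forall_map_ofReal_mulVec_eq_zero (N := fun k => S * M ^ k)
    (fun x hx => hObs x fun k => by rw [mulVec_mulVec, hx k]) fun k => ?_)
  change φ (S * M ^ k) *ᵥ v = 0
  rw [map_mul, ← mulVec_mulVec, hpow, mulVec_smul, hSv, smul_zero]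

end Complexification

section ClosedLoop

variable {ι κ : Type*} [Fintype ι] [Fintype κ]
  {A Q : Matrix ι ι ℝ} {B : Matrix ι κ ℝ} {R : Matrix κ κ ℝ}

theorem Matrix.PosSemidef.transpose_mul_mul_same (hR : R.PosSemidef) (K : Matrix κ ι ℝ) :
    (Kᵀ * R * K).PosSemidef := by
  simpa using hR.conjTranspose_mul_mul_same K

theorem Matrix.PosDef.add_transpose_mul_mul (hR : R.PosDef) {X : Matrix ι ι ℝ}
    (hX : X.PosSemidef) (B : Matrix ι κ ℝ) : (R + Bᵀ * X * B).PosDef :=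
  hR.add_posSemidef (hX.transpose_mul_mul_same B)

theorem mulVec_eq_zero_of_add_transpose_mul_mul_mulVec_eq_zero (hQ : Q.PosSemidef)
    (hR : R.PosDef) {K : Matrix κ ι ℝ} {y : ι → ℝ} (hy : (Q + Kᵀ * R * K) *ᵥ y = 0) :
    Q *ᵥ y = 0 ∧ K *ᵥ y = 0 := by
  have hsplit : y ⬝ᵥ Q *ᵥ y + K *ᵥ y ⬝ᵥ R *ᵥ (K *ᵥ y) = 0 := by
    rw [← dotProduct_zero y, ← hy, add_mulVec, dotProduct_add, ← mulVec_mulVec, ← mulVec_mulVec,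
      dotProduct_mulVec y Kᵀ, vecMul_transpose]
  have hQy : 0 ≤ y ⬝ᵥ Q *ᵥ y := by simpa using hQ.dotProduct_mulVec_nonneg y
  have hKy : 0 ≤ K *ᵥ y ⬝ᵥ R *ᵥ (K *ᵥ y) := by
    simpa using hR.posSemidef.dotProduct_mulVec_nonneg (K *ᵥ y)
  refine ⟨(hQ.dotProduct_mulVec_zero_iff y).mp (by simpa using (by linarith : y ⬝ᵥ Q *ᵥ y = 0)),
    by_contra fun hne => ?_⟩
  have := hR.dotProduct_mulVec_pos hne
  simp only [star_trivial] at this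
  linarith

theorem observable_sub_mul_of_observable [DecidableEq ι] (hQ : Q.PosSemidef) (hR : R.PosDef)
    (hObs : ∀ x, (∀ k, Q *ᵥ (A ^ k *ᵥ x) = 0) → x = 0) (K : Matrix κ ι ℝ) (x : ι → ℝ)
    (hx : ∀ k, (Q + Kᵀ * R * K) *ᵥ ((A - B * K) ^ k *ᵥ x) = 0) : x = 0 := by
  have hker k := mulVec_eq_zero_of_add_transpose_mul_mul_mulVec_eq_zero hQ hR (hx k)
  -- `K` annihilates the closed-loop trajectory, so it coincides with the open-loop one
  have htraj (k : ℕ) : (A - B * K) ^ k *ᵥ x = A ^ k *ᵥ x := by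
    induction k with
    | zero => rfl
    | succ k ih =>
      rw [pow_succ', ← mulVec_mulVec, sub_mulVec, ← mulVec_mulVec, (hker k).2, mulVec_zero,
        sub_zero, ih, mulVec_mulVec, ← pow_succ']
  exact hObs x fun k => htraj k ▸ (hker k).1

end ClosedLoop

theorem stmt_1 {n m : ℕ}
    (A : Matrix (Fin n) (Fin n) ℝ) (B : Matrix (Fin n) (Fin m) ℝ)
    (Q : Matrix (Fin n) (Fin n) ℝ) (R : Matrix (Fin m) (Fin m) ℝ)
    (hQ : Q.PosSemidef) (hR : R.PosDef)
    (hObs : ∀ x : Fin n → ℝ, (∀ k : ℕ, Q.mulVec ((A ^ k).mulVec x) = 0) → x = 0)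
    (K : Matrix (Fin m) (Fin n) ℝ)
    (hK : SchurStable (A - B * K))
    (P : Matrix (Fin n) (Fin n) ℝ) (hPsymm : P.IsSymm)
    (hP : P = Q + Kᵀ * R * K + (A - B * K)ᵀ * P * (A - B * K))
    (K' : Matrix (Fin m) (Fin n) ℝ)
    (hK' : K' = (R + Bᵀ * P * B)⁻¹ * (Bᵀ * P * A))
    (P' : Matrix (Fin n) (Fin n) ℝ) (hP'symm : P'.IsSymm)
    (hP' : P' = Q + K'ᵀ * R * K' + (A - B * K')ᵀ * P' * (A - B * K')) :
    (P - P').PosSemidef ∧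
      ∀ Pstar : Matrix (Fin n) (Fin n) ℝ, Pstar.PosSemidef →
        Aᵀ * Pstar * A - Pstar - Aᵀ * Pstar * B * (R + Bᵀ * Pstar * B)⁻¹ * (Bᵀ * Pstar * A)
          + Q = 0 →
        (P' - Pstar).PosSemidef := by
  have hRt : Rᵀ = R := (isHermitian_iff_isSymm.mp hR.isHermitian).eq
  have hPpsd : P.PosSemidef := .of_eq_add_transpose_mul_mul hK.tendsto_pow
    (hQ.add (hR.posSemidef.transpose_mul_mul_same K)) hPsymm hP
  have hG : (R + Bᵀ * P * B).PosDef := hR.add_transpose_mul_mul hPpsd B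
  have hGK' : (R + Bᵀ * P * B) * K' = Bᵀ * P * A :=
    hK' ▸ mul_nonsing_inv_cancel_left _ _ ((isUnit_iff_isUnit_det _).mp hG.isUnit)
  have hPK' : P = Q + K'ᵀ * R * K' + (K - K')ᵀ * (R + Bᵀ * P * B) * (K - K')
      + (A - B * K')ᵀ * P * (A - B * K') := by
    linear_combination (norm := abel) hP + completion_of_squares hPsymm.eq hRt hGK' K
  have hstab : SchurStable (A - B * K') :=
    .of_posSemidef_sub hPpsd (hQ.add (hR.posSemidef.transpose_mul_mul_same K'))
      (by nth_rw 1 [hPK']; simpa using hG.posSemidef.transpose_mul_mul_same (K - K'))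
      (observable_sub_mul_of_observable hQ hR hObs K')
  refine ⟨.sub_of_eq_add_transpose_mul_mul hstab.tendsto_pow hPK' hP'
    (by simpa using hG.posSemidef.transpose_mul_mul_same (K - K')) (hPsymm.sub hP'symm),
    fun Pstar hPstar hARE => ?_⟩
  have hPstarSymm : Pstar.IsSymm := isHermitian_iff_isSymm.mp hPstar.isHermitian
  have hGs : (R + Bᵀ * Pstar * B).PosDef := hR.add_transpose_mul_mul hPstar B
  obtain ⟨Ks, hGKs, hPstarKs⟩ :=
    exists_gain_of_riccati hPstarSymm.eq hRt ((isUnit_iff_isUnit_det _).mp hGs.isUnit) hARE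
  have hPstarK' : Pstar = Q + K'ᵀ * R * K' - (K' - Ks)ᵀ * (R + Bᵀ * Pstar * B) * (K' - Ks)
      + (A - B * K')ᵀ * Pstar * (A - B * K') := by
    linear_combination (norm := abel) hPstarKs - completion_of_squares hPstarSymm.eq hRt hGKs K'
  exact .sub_of_eq_add_transpose_mul_mul hstab.tendsto_pow hP' hPstarK'
    (by simpa using hGs.posSemidef.transpose_mul_mul_same (K' - Ks))
    (hP'symm.sub hPstarSymm)
end

section
/- Let γ > 0 and let K be an m×n real matrix such that γ(A − BK) is Schur stable. Then there exists a unique real symmetric n×n matrix P satisfying the scaled Lyapunov equation γ²(A − BK)ᵀP(A − BK) − P + Q + KᵀRK = 0, and this P is positive definite. -/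
open Matrix

/-!
With `N = γ • (A - B * K)` and `S = Q + Kᵀ * R * K` the equation is the Stein equation
`Nᵀ * P * N + S = P`. Gelfand's formula turns `ρ(N) < 1` into geometric decay of `‖N ^ k‖`
in the Frobenius norm, which is invariant under transposition and under `ℝ → ℂ`. Hence
`P = ∑ (Nᵀ) ^ k * S * N ^ k` converges and solves the equation, and the difference `D` of two
solutions satisfies `D = (Nᵀ) ^ k * D * N ^ k → 0`. Finally `xᵀ P x = ∑ (N ^ k x)ᵀ S (N ^ k x)`
is a sum of nonnegative terms; if all of them vanish then `Q` and `K` kill every `N ^ k x`, so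
the feedback never acts, `N ^ k x = γ ^ k • A ^ k x`, and observability of `(A, Q)` forces `x = 0`.
-/

open Filter Topology
open scoped NNReal ENNReal Matrix.Norms.Frobenius

theorem exists_nnnorm_pow_le_of_spectralRadius_lt_one {A : Type*} [NormedRing A]
    [NormedAlgebra ℂ A] [CompleteSpace A] {a : A} (h : spectralRadius ℂ a < 1) :
    ∃ r : ℝ≥0, r < 1 ∧ ∀ᶠ k in atTop, ‖a ^ k‖₊ ≤ r ^ k := by
  obtain ⟨r, hρr, hr1⟩ := ENNReal.lt_iff_exists_nnreal_btwn.mp h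
  refine ⟨r, mod_cast hr1, ?_⟩
  filter_upwards [(spectrum.pow_nnnorm_pow_one_div_tendsto_nhds_spectralRadius a).eventually_lt_const
    hρr, eventually_ne_atTop 0] with k hk hk0
  have := ENNReal.rpow_le_rpow hk.le (Nat.cast_nonneg (α := ℝ) k)
  rw [← ENNReal.rpow_mul, one_div_mul_cancel (mod_cast hk0), ENNReal.rpow_one,
    ENNReal.rpow_natCast] at this
  exact_mod_cast this

section

variable {ι κ : Type*} [Fintype ι] [Fintype κ]

theorem dotProduct_transpose_mul_mul_mulVec (X : Matrix κ κ ℝ) (N : Matrix κ ι ℝ) (x : ι → ℝ) :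
    x ⬝ᵥ (Nᵀ * X * N) *ᵥ x = (N *ᵥ x) ⬝ᵥ X *ᵥ (N *ᵥ x) := by
  rw [← mulVec_mulVec, ← mulVec_mulVec, dotProduct_mulVec, vecMul_transpose]

theorem add_transpose_mul_mul_mulVec_eq_zero_iff {Q : Matrix ι ι ℝ} {R : Matrix κ κ ℝ}
    (hQ : Q.PosSemidef) (hR : R.PosDef) (K : Matrix κ ι ℝ) (y : ι → ℝ) :
    (Q + Kᵀ * R * K) *ᵥ y = 0 ↔ Q *ᵥ y = 0 ∧ K *ᵥ y = 0 := by
  refine ⟨fun hy => ?_, fun ⟨hQy, hKy⟩ => by simp [add_mulVec, ← mulVec_mulVec, hQy, hKy]⟩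
  have hsplit : y ⬝ᵥ Q *ᵥ y + (K *ᵥ y) ⬝ᵥ R *ᵥ (K *ᵥ y) = 0 := by
    rw [← dotProduct_transpose_mul_mul_mulVec, ← dotProduct_add, ← add_mulVec, hy,
      dotProduct_zero]
  have hQnonneg : 0 ≤ y ⬝ᵥ Q *ᵥ y := by simpa using hQ.dotProduct_mulVec_nonneg y
  have hRnonneg : 0 ≤ (K *ᵥ y) ⬝ᵥ R *ᵥ (K *ᵥ y) := by
    simpa using hR.posSemidef.dotProduct_mulVec_nonneg (K *ᵥ y)
  have hQy : y ⬝ᵥ Q *ᵥ y = 0 := by linarith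
  refine ⟨(hQ.dotProduct_mulVec_zero_iff y).mp (by simpa using hQy), ?_⟩
  by_contra hKy
  have := hR.dotProduct_mulVec_pos hKy
  simp only [star_trivial] at this
  linarith

variable [DecidableEq ι]

theorem norm_transpose_pow_mul_mul_pow_le (N X : Matrix ι ι ℝ) (k : ℕ) :
    ‖(Nᵀ) ^ k * X * N ^ k‖ ≤ ‖X‖ * ‖N ^ k‖ ^ 2 :=
  calc ‖(Nᵀ) ^ k * X * N ^ k‖ ≤ ‖(Nᵀ) ^ k‖ * ‖X‖ * ‖N ^ k‖ := norm_mul₃_le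
    _ = ‖X‖ * ‖N ^ k‖ ^ 2 := by rw [← transpose_pow, frobenius_norm_transpose]; ring

noncomputable def steinSum (N S : Matrix ι ι ℝ) : Matrix ι ι ℝ :=
  ∑' k, (Nᵀ) ^ k * S * N ^ k

theorem steinSum_isSymm (N : Matrix ι ι ℝ) {S : Matrix ι ι ℝ} (hS : S.IsSymm) :
    (steinSum N S).IsSymm := by
  rw [IsSymm, steinSum, transpose_tsum]
  simp only [transpose_mul, transpose_pow, transpose_transpose, hS.eq, mul_assoc]

def Matrix.Observable {R : Type*} [Semiring R] (A : Matrix ι ι R) (C : Matrix κ ι R) : Prop :=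
  ∀ x : ι → R, (∀ k : ℕ, C *ᵥ (A ^ k *ᵥ x) = 0) → x = 0

theorem pow_mulVec_eq_of_forall_mulVec_pow_mulVec_eq_zero {A : Matrix ι ι ℝ} {B : Matrix ι κ ℝ}
    {K : Matrix κ ι ℝ} {x : ι → ℝ} (hK : ∀ k, K *ᵥ ((A - B * K) ^ k *ᵥ x) = 0) (k : ℕ) :
    (A - B * K) ^ k *ᵥ x = A ^ k *ᵥ x := by
  induction k with
  | zero => simp
  | succ k ih =>
    rw [pow_succ', ← mulVec_mulVec, sub_mulVec, ← mulVec_mulVec _ B K, hK k, mulVec_zero,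
      sub_zero, ih, mulVec_mulVec, ← pow_succ']

theorem Matrix.Observable.closedLoop {A : Matrix ι ι ℝ} {B : Matrix ι κ ℝ} {Q : Matrix ι ι ℝ}
    {R : Matrix κ κ ℝ} (hObs : A.Observable Q) (hQ : Q.PosSemidef) (hR : R.PosDef) {γ : ℝ}
    (hγ : γ ≠ 0) (K : Matrix κ ι ℝ) : (γ • (A - B * K)).Observable (Q + Kᵀ * R * K) := by
  intro x hx
  have hzero : ∀ k, Q *ᵥ ((A - B * K) ^ k *ᵥ x) = 0 ∧ K *ᵥ ((A - B * K) ^ k *ᵥ x) = 0 := by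
    intro k
    have := hx k
    rwa [smul_pow, smul_mulVec, mulVec_smul, smul_eq_zero_iff_right (pow_ne_zero k hγ),
      add_transpose_mul_mul_mulVec_eq_zero_iff hQ hR] at this
  refine hObs x fun k => ?_
  rw [← pow_mulVec_eq_of_forall_mulVec_pow_mulVec_eq_zero fun k => (hzero k).2]
  exact (hzero k).1

end

namespace SchurStable

variable {n : ℕ} {N : Matrix (Fin n) (Fin n) ℝ}

theorem spectralRadius_lt_one (h : SchurStable N) :
    spectralRadius ℂ (N.map (algebraMap ℝ ℂ)) < 1 := by
  rcases (spectrum ℂ (N.map (algebraMap ℝ ℂ))).eq_empty_or_nonempty with hempty | hne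
  · rw [spectralRadius, hempty]
    simp
  · exact_mod_cast spectrum.spectralRadius_lt_of_forall_lt_of_nonempty hne (r := 1)
      fun z hz => mod_cast h z hz

theorem summable_norm_pow_sq (h : SchurStable N) : Summable fun k => ‖N ^ k‖ ^ 2 := by
  obtain ⟨r, hr1, hr⟩ := exists_nnnorm_pow_le_of_spectralRadius_lt_one h.spectralRadius_lt_one
  have hr1' : (r : ℝ) ^ 2 < 1 := by
    have : (r : ℝ) < 1 := mod_cast hr1
    nlinarith [r.coe_nonneg]
  refine Summable.of_norm_bounded_eventually_nat
    (summable_geometric_of_lt_one (sq_nonneg (r : ℝ)) hr1') ?_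
  filter_upwards [hr] with k hk
  rw [← RingHom.mapMatrix_apply, ← map_pow, RingHom.mapMatrix_apply,
    frobenius_nnnorm_map_eq _ (algebraMap ℝ ℂ) fun a => Complex.nnnorm_real a] at hk
  have : ‖N ^ k‖ ≤ r ^ k := mod_cast hk
  rw [norm_pow, norm_norm, ← pow_mul, mul_comm, pow_mul]
  gcongr

theorem summable_stein (h : SchurStable N) (S : Matrix (Fin n) (Fin n) ℝ) :
    Summable fun k => (Nᵀ) ^ k * S * N ^ k :=
  .of_norm_bounded (h.summable_norm_pow_sq.mul_left ‖S‖) (norm_transpose_pow_mul_mul_pow_le N S)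

theorem transpose_mul_steinSum_mul_add (h : SchurStable N) (S : Matrix (Fin n) (Fin n) ℝ) :
    Nᵀ * steinSum N S * N + S = steinSum N S := by
  have hsum := h.summable_stein S
  calc Nᵀ * steinSum N S * N + S = ∑' k, (Nᵀ) ^ (k + 1) * S * N ^ (k + 1) + S := by
        rw [steinSum, ← ((hsum.hasSum.mul_left Nᵀ).mul_right N).tsum_eq]
        simp only [pow_succ' Nᵀ, pow_succ N, mul_assoc]
    _ = steinSum N S := by rw [steinSum, hsum.tsum_eq_zero_add]; simp [add_comm]

theorem eq_zero_of_transpose_mul_mul_eq (h : SchurStable N) {D : Matrix (Fin n) (Fin n) ℝ}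
    (hD : Nᵀ * D * N = D) : D = 0 := by
  have hDk : ∀ k, (Nᵀ) ^ k * D * N ^ k = D := by
    intro k
    induction k with
    | zero => simp
    | succ k ih =>
      calc (Nᵀ) ^ (k + 1) * D * N ^ (k + 1) = (Nᵀ) ^ k * (Nᵀ * D * N) * N ^ k := by
            rw [pow_succ, pow_succ']
            simp only [mul_assoc]
        _ = D := by rw [hD, ih]
  have hlim : Tendsto (fun k => ‖D‖ * ‖N ^ k‖ ^ 2) atTop (𝓝 0) := by
    simpa using h.summable_norm_pow_sq.tendsto_atTop_zero.const_mul ‖D‖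
  have hle : ∀ k, ‖D‖ ≤ ‖D‖ * ‖N ^ k‖ ^ 2 := fun k => by
    simpa only [hDk k] using norm_transpose_pow_mul_mul_pow_le N D k
  exact norm_le_zero_iff.mp (ge_of_tendsto' hlim hle)

theorem eq_steinSum (h : SchurStable N) {S P : Matrix (Fin n) (Fin n) ℝ}
    (hP : Nᵀ * P * N + S = P) : P = steinSum N S := by
  refine sub_eq_zero.mp (h.eq_zero_of_transpose_mul_mul_eq ?_)
  have hsol := h.transpose_mul_steinSum_mul_add S
  rw [mul_sub, sub_mul]
  nth_rewrite 2 [← hP, ← hsol]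
  abel

theorem hasSum_dotProduct_steinSum_mulVec (h : SchurStable N) (S : Matrix (Fin n) (Fin n) ℝ)
    (x : Fin n → ℝ) :
    HasSum (fun k => (N ^ k *ᵥ x) ⬝ᵥ S *ᵥ (N ^ k *ᵥ x)) (x ⬝ᵥ steinSum N S *ᵥ x) := by
  let q : Matrix (Fin n) (Fin n) ℝ →+ ℝ :=
    { toFun := fun X => x ⬝ᵥ X *ᵥ x
      map_zero' := by simp
      map_add' := fun X Y => by simp [add_mulVec, dotProduct_add] }
  have hq : Continuous q :=
    continuous_const.dotProduct (continuous_id.matrix_mulVec continuous_const)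
  convert (h.summable_stein S).hasSum.map q hq using 1
  · ext k
    simp [q, ← transpose_pow, dotProduct_transpose_mul_mul_mulVec]
  · rfl

theorem steinSum_posDef (h : SchurStable N) {S : Matrix (Fin n) (Fin n) ℝ} (hS : S.PosSemidef)
    (hobs : N.Observable S) : (steinSum N S).PosDef := by
  refine .of_dotProduct_mulVec_pos (isHermitian_iff_isSymm.mpr
    (steinSum_isSymm N (isHermitian_iff_isSymm.mp hS.1))) fun x hx => ?_
  have hsum := h.hasSum_dotProduct_steinSum_mulVec S x
  have hnonneg : ∀ k, 0 ≤ (N ^ k *ᵥ x) ⬝ᵥ S *ᵥ (N ^ k *ᵥ x) := fun k => by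
    simpa using hS.dotProduct_mulVec_nonneg (N ^ k *ᵥ x)
  obtain ⟨k, hk⟩ : ∃ k, 0 < (N ^ k *ᵥ x) ⬝ᵥ S *ᵥ (N ^ k *ᵥ x) := by
    by_contra! hzero
    refine hx (hobs x fun k => (hS.dotProduct_mulVec_zero_iff _).mp ?_)
    simpa using le_antisymm (hzero k) (hnonneg k)
  rw [star_trivial, ← hsum.tsum_eq]
  exact hsum.summable.tsum_pos hnonneg k hk

end SchurStable

theorem stmt_4 {n m : ℕ}
    (A : Matrix (Fin n) (Fin n) ℝ) (B : Matrix (Fin n) (Fin m) ℝ)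
    (Q : Matrix (Fin n) (Fin n) ℝ) (R : Matrix (Fin m) (Fin m) ℝ)
    (hQ : Q.PosSemidef) (hR : R.PosDef)
    (hObs : ∀ x : Fin n → ℝ, (∀ k : ℕ, Q.mulVec ((A ^ k).mulVec x) = 0) → x = 0)
    (γ : ℝ) (hγ : 0 < γ)
    (K : Matrix (Fin m) (Fin n) ℝ)
    (hK : SchurStable (γ • (A - B * K))) :
    (∃! P : Matrix (Fin n) (Fin n) ℝ, P.IsSymm ∧
        γ ^ 2 • ((A - B * K)ᵀ * P * (A - B * K)) - P + Q + Kᵀ * R * K = 0) ∧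
      (∀ P : Matrix (Fin n) (Fin n) ℝ, P.IsSymm →
        γ ^ 2 • ((A - B * K)ᵀ * P * (A - B * K)) - P + Q + Kᵀ * R * K = 0 →
        P.PosDef) := by
  set N := γ • (A - B * K)
  set S := Q + Kᵀ * R * K with hS_def
  have hscaled : ∀ P, γ ^ 2 • ((A - B * K)ᵀ * P * (A - B * K)) = Nᵀ * P * N := fun P => by
    simp only [N, transpose_smul, smul_mul_assoc, mul_smul_comm, smul_smul, sq]
  have hstein : ∀ P, γ ^ 2 • ((A - B * K)ᵀ * P * (A - B * K)) - P + Q + Kᵀ * R * K = 0 ↔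
      Nᵀ * P * N + S = P := fun P => by
    rw [hscaled, hS_def, ← sub_eq_zero (b := P)]
    constructor <;> intro h <;> rw [← h] <;> abel
  have hS : S.PosSemidef := hQ.add <| by
    simpa only [conjTranspose_eq_transpose_of_trivial] using
      hR.posSemidef.conjTranspose_mul_mul_same K
  have hposDef : (steinSum N S).PosDef :=
    hK.steinSum_posDef hS (Observable.closedLoop hObs hQ hR hγ.ne' K)
  refine ⟨⟨steinSum N S, ⟨isHermitian_iff_isSymm.mp hposDef.1,
      (hstein _).2 (hK.transpose_mul_steinSum_mul_add S)⟩,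
    fun P hP => hK.eq_steinSum ((hstein P).1 hP.2)⟩, fun P _ hP => ?_⟩
  rw [hK.eq_steinSum ((hstein P).1 hP)]
  exact hposDef
end

section
/- Let γ > 0, let K be an m×n real matrix, let P be a real symmetric n×n matrix satisfying γ²(A − BK)ᵀP(A − BK) − P + Q + KᵀRK = 0, assume the matrix BᵀPB + (1/γ²)R is invertible, and set K' = (BᵀPB + (1/γ²)R)⁻¹BᵀPA. Then the following matrix identity holds: γ²(A − BK')ᵀP(A − BK') − P = −( Q + K'ᵀRK' + (K − K')ᵀ(γ²BᵀPB + R)(K − K') ). -/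
/-!
Write `S = γ²BᵀPB + R`. The choice of `K'` means `S K' = γ²BᵀPA`, so `K'` is the stationary
point of the closed-loop cost `γ²(A - BK)ᵀP(A - BK) + KᵀRK`, a quadratic form in `K` with
Hessian `S`; completing the square shows the cost exceeds its value at `K'` by exactly
`(K - K')ᵀS(K - K')`.
Substituting the Lyapunov equation for `K` then gives the identity for `K'`.
-/

open Matrix

namespace Matrix

variable {α ι κ : Type*} [CommRing α] [Fintype κ]

theorem transpose_mul_mul_sub_eq_of_mul_eq {S : Matrix κ κ α} (hS : S.IsSymm)
    {K K' C : Matrix κ ι α} (hK' : S * K' = C) :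
    Kᵀ * S * K - Cᵀ * K - Kᵀ * C = (K - K')ᵀ * S * (K - K') - K'ᵀ * S * K' := by
  subst hK'
  rw [transpose_mul, hS.eq]
  simp only [transpose_sub, Matrix.sub_mul, Matrix.mul_sub, Matrix.mul_assoc]
  abel

theorem closedLoop_cost_eq [Fintype ι] {A P : Matrix ι ι α} {B : Matrix ι κ α}
    {R : Matrix κ κ α} (hP : P.IsSymm) (K : Matrix κ ι α) :
    (A - B * K)ᵀ * P * (A - B * K) + Kᵀ * R * K =
      Aᵀ * P * A + (Kᵀ * (Bᵀ * P * B + R) * K - (Bᵀ * P * A)ᵀ * K - Kᵀ * (Bᵀ * P * A)) := by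
  rw [transpose_mul, transpose_mul, hP.eq]
  simp only [transpose_sub, transpose_mul, transpose_transpose, Matrix.sub_mul, Matrix.mul_sub,
    Matrix.mul_add, Matrix.add_mul, Matrix.mul_assoc]
  abel

theorem closedLoop_cost_eq_add_of_mul_eq [Fintype ι] {A P : Matrix ι ι α} {B : Matrix ι κ α}
    {R : Matrix κ κ α} (hP : P.IsSymm) (hR : R.IsSymm) {K' : Matrix κ ι α}
    (hK' : (Bᵀ * P * B + R) * K' = Bᵀ * P * A) (K : Matrix κ ι α) :
    (A - B * K)ᵀ * P * (A - B * K) + Kᵀ * R * K =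
      (A - B * K')ᵀ * P * (A - B * K') + K'ᵀ * R * K' +
        (K - K')ᵀ * (Bᵀ * P * B + R) * (K - K') := by
  have hS : (Bᵀ * P * B + R).IsSymm := by
    refine IsSymm.add ?_ hR
    rw [IsSymm, transpose_mul, transpose_mul, hP.eq, transpose_transpose, Matrix.mul_assoc]
  rw [closedLoop_cost_eq hP, closedLoop_cost_eq hP, transpose_mul_mul_sub_eq_of_mul_eq hS hK',
    transpose_mul_mul_sub_eq_of_mul_eq hS hK', sub_self, transpose_zero, Matrix.zero_mul,
    Matrix.zero_mul]
  abel

end Matrix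

theorem stmt_6_general {n m : ℕ}
    (A : Matrix (Fin n) (Fin n) ℝ) (B : Matrix (Fin n) (Fin m) ℝ)
    (Q : Matrix (Fin n) (Fin n) ℝ) (R : Matrix (Fin m) (Fin m) ℝ)
    (hR : R.PosDef)
    (γ : ℝ) (hγ : 0 < γ)
    (K : Matrix (Fin m) (Fin n) ℝ)
    (P : Matrix (Fin n) (Fin n) ℝ) (hPsymm : P.IsSymm)
    (hP : γ ^ 2 • ((A - B * K)ᵀ * P * (A - B * K)) - P + Q + Kᵀ * R * K = 0)
    (hInv : IsUnit (Bᵀ * P * B + (1 / γ ^ 2) • R))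
    (K' : Matrix (Fin m) (Fin n) ℝ)
    (hK' : K' = (Bᵀ * P * B + (1 / γ ^ 2) • R)⁻¹ * (Bᵀ * P * A)) :
    γ ^ 2 • ((A - B * K')ᵀ * P * (A - B * K')) - P =
      -(Q + K'ᵀ * R * K' + (K - K')ᵀ * (γ ^ 2 • (Bᵀ * P * B) + R) * (K - K')) := by
  have hScale : Bᵀ * (γ ^ 2 • P) * B + R = γ ^ 2 • (Bᵀ * P * B + (1 / γ ^ 2) • R) := by
    rw [smul_add, smul_smul, mul_one_div_cancel (pow_ne_zero 2 hγ.ne'), one_smul,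
      Matrix.mul_smul, Matrix.smul_mul]
  have hK'opt : (Bᵀ * (γ ^ 2 • P) * B + R) * K' = Bᵀ * (γ ^ 2 • P) * A := by
    rw [hScale, Matrix.smul_mul, hK', Matrix.mul_nonsing_inv_cancel_left _ _
      ((isUnit_iff_isUnit_det _).mp hInv), Matrix.mul_smul, Matrix.smul_mul]
  have key := closedLoop_cost_eq_add_of_mul_eq (hPsymm.smul _)
    (isHermitian_iff_isSymm.mp hR.isHermitian) hK'opt K
  simp only [Matrix.mul_smul, Matrix.smul_mul] at key
  rw [eq_neg_iff_add_eq_zero, ← hP]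
  linear_combination (norm := abel) -key

theorem stmt_6 {n m : ℕ}
    (A : Matrix (Fin n) (Fin n) ℝ) (B : Matrix (Fin n) (Fin m) ℝ)
    (Q : Matrix (Fin n) (Fin n) ℝ) (R : Matrix (Fin m) (Fin m) ℝ)
    (hQ : Q.PosSemidef) (hR : R.PosDef)
    (γ : ℝ) (hγ : 0 < γ)
    (K : Matrix (Fin m) (Fin n) ℝ)
    (P : Matrix (Fin n) (Fin n) ℝ) (hPsymm : P.IsSymm)
    (hP : γ ^ 2 • ((A - B * K)ᵀ * P * (A - B * K)) - P + Q + Kᵀ * R * K = 0)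
    (hInv : IsUnit (Bᵀ * P * B + (1 / γ ^ 2) • R))
    (K' : Matrix (Fin m) (Fin n) ℝ)
    (hK' : K' = (Bᵀ * P * B + (1 / γ ^ 2) • R)⁻¹ * (Bᵀ * P * A)) :
    γ ^ 2 • ((A - B * K')ᵀ * P * (A - B * K')) - P =
      -(Q + K'ᵀ * R * K' + (K - K')ᵀ * (γ ^ 2 • (Bᵀ * P * B) + R) * (K - K')) :=
  stmt_6_general A B Q R hR γ hγ K P hPsymm hP hInv K' hK'
end

section
/- Let γ > 0, let K be an m×n real matrix, and let P be a real symmetric n×n matrix satisfying γ²(A − BK)ᵀP(A − BK) − P + Q + KᵀRK = 0. Then for every x ∈ ℝⁿ and u ∈ ℝᵐ, with x' = Ax + Bu, the following identity holds: γ²·x'ᵀPx' − xᵀPx = −xᵀ(Q + KᵀRK)x − γ²·(Kx)ᵀBᵀPB(Kx) + γ²·( 2·xᵀAᵀPB·(Kx + u) + uᵀBᵀPBu ). -/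
open Matrix

theorem stmt_14 {n m : ℕ}
    (A : Matrix (Fin n) (Fin n) ℝ) (B : Matrix (Fin n) (Fin m) ℝ)
    (Q : Matrix (Fin n) (Fin n) ℝ) (R : Matrix (Fin m) (Fin m) ℝ)
    (hQ : Q.PosSemidef) (hR : R.PosDef)
    (γ : ℝ) (hγ : 0 < γ)
    (K : Matrix (Fin m) (Fin n) ℝ)
    (P : Matrix (Fin n) (Fin n) ℝ) (hPsymm : P.IsSymm)
    (hP : γ ^ 2 • ((A - B * K)ᵀ * P * (A - B * K)) - P + Q + Kᵀ * R * K = 0)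
    (x : Fin n → ℝ) (u : Fin m → ℝ)
    (x' : Fin n → ℝ) (hx' : x' = A.mulVec x + B.mulVec u) :
    γ ^ 2 * (x' ⬝ᵥ P.mulVec x') - x ⬝ᵥ P.mulVec x =
      -(x ⬝ᵥ (Q + Kᵀ * R * K).mulVec x)
        - γ ^ 2 * (K.mulVec x ⬝ᵥ (Bᵀ * P * B).mulVec (K.mulVec x))
        + γ ^ 2 * (2 * (x ⬝ᵥ (Aᵀ * P * B).mulVec (K.mulVec x + u))
            + u ⬝ᵥ (Bᵀ * P * B).mulVec u) := by
  have hQK : Q + Kᵀ * R * K = P - γ ^ 2 • ((A - B * K)ᵀ * P * (A - B * K)) := by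
    rw [eq_sub_iff_add_eq]
    calc Q + Kᵀ * R * K + γ ^ 2 • ((A - B * K)ᵀ * P * (A - B * K))
        = (γ ^ 2 • ((A - B * K)ᵀ * P * (A - B * K)) - P + Q + Kᵀ * R * K) + P := by abel
      _ = P := by rw [hP]; rw [zero_add]
  have htr : ∀ {a b : ℕ} (M : Matrix (Fin a) (Fin b) ℝ) (v : Fin b → ℝ) (w : Fin a → ℝ),
      v ⬝ᵥ Mᵀ *ᵥ w = (M *ᵥ v) ⬝ᵥ w := by
    intro a b M v w
    rw [dotProduct_mulVec, vecMul_transpose]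
  have hsym : ∀ v w : Fin n → ℝ, v ⬝ᵥ P *ᵥ w = w ⬝ᵥ P *ᵥ v := by
    intro v w
    rw [dotProduct_mulVec, dotProduct_comm, ← mulVec_transpose, hPsymm.eq]
  subst hx'
  rw [hQK]
  simp only [← mulVec_mulVec, transpose_mul, transpose_transpose, sub_mulVec, add_mulVec,
    mulVec_add, mulVec_sub, smul_mulVec, dotProduct_add, dotProduct_sub,
    dotProduct_smul, add_dotProduct, sub_dotProduct, htr, smul_eq_mul]
  linear_combination -γ^2 * hsym (A *ᵥ x) (B *ᵥ u) - γ^2 * hsym (A *ᵥ x) (B *ᵥ K *ᵥ x)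
end
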